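/- arXiv:2004.12683 — 3 statements merged into one kernel-verified Lean document; each statement's English description precedes it below -/
import Mathlib

section
/- Let G be a graph and let X₁, X₂ ⊆ V(G) with X₁ ∪ X₂ = V(G) such that X := X₁ ∩ X₂ separates X₁ from X₂ (every path from X₁ to X₂ passes through X). Then the minimum size of an edge clique cover of G is at least (minimum edge clique cover of G[X₁]) + (minimum edge clique cover of G[X₂]) − C(|X|,2). -/
/-- An edge clique cover of a graph: a family of vertex subsets, each inducing a clique,
such that every edge has both endpoints in some member. -/
def IsEdgeCliqueCover {α : Type*} (G : SimpleGraph α) (S : Finset (Finset α)) : Prop :=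
  (∀ C ∈ S, G.IsClique (↑C : Set α)) ∧
  (∀ u v : α, G.Adj u v → ∃ C ∈ S, u ∈ C ∧ v ∈ C)

/-- The minimum size of an edge clique cover. -/
noncomputable def eccNum {α : Type*} (G : SimpleGraph α) : ℕ :=
  sInf {n | ∃ S : Finset (Finset α), IsEdgeCliqueCover G S ∧ S.card = n}

/-!
Take a minimum edge clique cover `S` of `G`. Since no edge joins `X₁ \ X` to `X₂ \ X`, every
clique lies in `X₁` or in `X₂`, so `S` splits as `T₁ ∪ T₂` with the cliques of `Tᵢ` inside `Xᵢ`.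
Any edge of `G[X₁]` missed by `T₁` is covered by `T₂`, hence lies inside `X`; adding it as a
two-element clique turns `T₁` into a cover of `G[X₁]`, and symmetrically for `G[X₂]`. An edge of
`G[X]` is missed by at most one of `T₁`, `T₂`, so at most `C(|X|, 2)` pairs are added in total.
-/

open Finset

section

variable {V : Type*}

lemma IsEdgeCliqueCover.eccNum_le {G : SimpleGraph V} {S : Finset (Finset V)}
    (hS : IsEdgeCliqueCover G S) : eccNum G ≤ #S :=
  Nat.sInf_le ⟨S, hS, rfl⟩

lemma exists_isEdgeCliqueCover_card_eq_eccNum [Fintype V] (G : SimpleGraph V) :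
    ∃ S : Finset (Finset V), IsEdgeCliqueCover G S ∧ #S = eccNum G := by
  classical
  have hcliques : IsEdgeCliqueCover G (univ.filter fun C : Finset V => G.IsClique (C : Set V)) :=
    ⟨fun C hC => (mem_filter.1 hC).2, fun u v huv =>
      ⟨{u, v}, mem_filter.2 ⟨mem_univ _, by simpa [SimpleGraph.isClique_pair] using fun _ => huv⟩,
        by simp, by simp⟩⟩
  exact Nat.sInf_mem (s := {n | ∃ S, IsEdgeCliqueCover G S ∧ #S = n}) ⟨_, _, hcliques, rfl⟩

lemma eccNum_induce_le_card {G : SimpleGraph V} {X : Finset V} {S : Finset (Finset V)}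
    (hclique : ∀ C ∈ S, G.IsClique (C : Set V))
    (hcov : ∀ u v, G.Adj u v → u ∈ X → v ∈ X → ∃ C ∈ S, u ∈ C ∧ v ∈ C) :
    eccNum (G.induce (X : Set V)) ≤ #S := by
  classical
  let restrict (C : Finset V) : Finset (X : Set V) := C.subtype (· ∈ (X : Set V))
  have hcover : IsEdgeCliqueCover (G.induce (X : Set V)) (S.image restrict) := by
    refine ⟨?_, fun u v huv => ?_⟩
    · simp only [mem_image]
      rintro _ ⟨C, hC, rfl⟩ u hu v hv huv
      exact hclique C hC (mem_subtype.1 hu) (mem_subtype.1 hv) (Subtype.coe_ne_coe.2 huv)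
    · obtain ⟨C, hC, huC, hvC⟩ := hcov u v huv (mem_coe.1 u.2) (mem_coe.1 v.2)
      exact ⟨restrict C, mem_image_of_mem _ hC, mem_subtype.2 huC, mem_subtype.2 hvC⟩
  exact hcover.eccNum_le.trans card_image_le

lemma SimpleGraph.IsClique.subset_or_subset [Fintype V] [DecidableEq V] {G : SimpleGraph V}
    {X₁ X₂ C : Finset V}
    (hunion : X₁ ∪ X₂ = univ)
    (hsep : ∀ u v : V, G.Adj u v → u ∈ X₁ \ (X₁ ∩ X₂) → v ∉ X₂ \ (X₁ ∩ X₂))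
    (hC : G.IsClique (C : Set V)) : C ⊆ X₁ ∨ C ⊆ X₂ := by
  by_contra! h
  obtain ⟨⟨a, haC, ha₁⟩, ⟨b, hbC, hb₂⟩⟩ := And.imp not_subset.1 not_subset.1 h
  have hmem (x : V) : x ∈ X₁ ∨ x ∈ X₂ := mem_union.1 (hunion ▸ mem_univ x)
  have ha₂ : a ∈ X₂ := (hmem a).resolve_left ha₁
  have hb₁ : b ∈ X₁ := (hmem b).resolve_right hb₂
  have hba : G.Adj b a := hC hbC haC fun h => ha₁ (h ▸ hb₁)
  exact hsep b a hba (by simp [hb₁, hb₂]) (by simp [ha₁, ha₂])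

def uncoveredPairs [DecidableEq V] (G : SimpleGraph V) [DecidableRel G.Adj] (Y : Finset V)
    (T : Finset (Finset V)) : Finset (Finset V) :=
  (Y.powersetCard 2).filter fun p => G.IsClique (p : Set V) ∧ ∀ C ∈ T, ¬ p ⊆ C

lemma pair_mem_uncoveredPairs [DecidableEq V] {G : SimpleGraph V} [DecidableRel G.Adj]
    {Y : Finset V} {T : Finset (Finset V)} {u v : V} (huv : G.Adj u v) (hu : u ∈ Y) (hv : v ∈ Y)
    (hT : ¬ ∃ C ∈ T, u ∈ C ∧ v ∈ C) : {u, v} ∈ uncoveredPairs G Y T := by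
  have hne : u ≠ v := huv.ne
  unfold uncoveredPairs
  simp only [mem_filter, mem_powersetCard, insert_subset_iff, singleton_subset_iff, coe_pair,
    SimpleGraph.isClique_pair, card_pair hne]
  exact ⟨⟨⟨hu, hv⟩, trivial⟩, fun _ => huv, fun C hC huvC => hT ⟨C, hC, huvC⟩⟩

lemma eccNum_induce_le_card_add_card_uncoveredPairs [DecidableEq V] {G : SimpleGraph V}
    [DecidableRel G.Adj]
    {X Z : Finset V} {T T' : Finset (Finset V)} (hS : IsEdgeCliqueCover G (T ∪ T'))
    (hT' : ∀ C ∈ T', C ⊆ Z) :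
    eccNum (G.induce (X : Set V)) ≤ #T + #(uncoveredPairs G (X ∩ Z) T) := by
  classical
  refine (eccNum_induce_le_card (S := T ∪ uncoveredPairs G (X ∩ Z) T) ?_ ?_).trans
    (card_union_le _ _)
  · intro C hC
    rcases mem_union.1 hC with hC | hC
    · exact hS.1 C (mem_union_left _ hC)
    · exact (mem_filter.1 hC).2.1
  · intro u v huv hu hv
    by_cases hcovered : ∃ C ∈ T, u ∈ C ∧ v ∈ C
    · obtain ⟨C, hC, huvC⟩ := hcovered
      exact ⟨C, mem_union_left _ hC, huvC⟩
    obtain ⟨C, hC, huC, hvC⟩ := hS.2 u v huv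
    have hCT' : C ∈ T' :=
      (mem_union.1 hC).resolve_left fun hCT => hcovered ⟨C, hCT, huC, hvC⟩
    refine ⟨{u, v}, mem_union_right _ ?_, by simp, by simp⟩
    exact pair_mem_uncoveredPairs huv (mem_inter.2 ⟨hu, hT' C hCT' huC⟩)
      (mem_inter.2 ⟨hv, hT' C hCT' hvC⟩) hcovered

lemma card_add_card_uncoveredPairs_le [DecidableEq V] {G : SimpleGraph V} [DecidableRel G.Adj]
    {Y : Finset V} {T₁ T₂ : Finset (Finset V)} (hS : IsEdgeCliqueCover G (T₁ ∪ T₂)) :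
    #(uncoveredPairs G Y T₁) + #(uncoveredPairs G Y T₂) ≤ (#Y).choose 2 := by
  have hdisj : Disjoint (uncoveredPairs G Y T₁) (uncoveredPairs G Y T₂) := by
    refine disjoint_left.2 fun p hp₁ hp₂ => ?_
    simp only [uncoveredPairs, mem_filter, mem_powersetCard] at hp₁ hp₂
    obtain ⟨u, v, hne, rfl⟩ := card_eq_two.1 hp₁.1.2
    have huv : G.Adj u v := by simpa [coe_pair, SimpleGraph.isClique_pair, hne] using hp₁.2.1
    obtain ⟨C, hC, huC, hvC⟩ := hS.2 u v huv
    have hpC : {u, v} ⊆ C := insert_subset huC (singleton_subset_iff.2 hvC)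
    rcases mem_union.1 hC with hC | hC
    · exact hp₁.2.2 C hC hpC
    · exact hp₂.2.2 C hC hpC
  rw [← card_union_of_disjoint hdisj, ← card_powersetCard]
  exact card_le_card (union_subset (filter_subset ..) (filter_subset ..))

end

/-- If `X₁ ∪ X₂ = V(G)` and `X = X₁ ∩ X₂` separates `X₁` from `X₂`
(no edge between `X₁ \ X` and `X₂ \ X`), then
`eccNum G[X₁] + eccNum G[X₂] ≤ eccNum G + C(|X|,2)`. -/
theorem stmt_4 {V : Type*} [Fintype V] [DecidableEq V] (G : SimpleGraph V)
    (X₁ X₂ : Finset V) (hunion : X₁ ∪ X₂ = Finset.univ)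
    (hsep : ∀ u v : V, G.Adj u v → u ∈ X₁ \ (X₁ ∩ X₂) → v ∉ X₂ \ (X₁ ∩ X₂)) :
    eccNum (G.induce (↑X₁ : Set V)) + eccNum (G.induce (↑X₂ : Set V)) ≤
      eccNum G + (X₁ ∩ X₂).card.choose 2 := by
  obtain ⟨S, hS, hcard⟩ := exists_isEdgeCliqueCover_card_eq_eccNum G
  classical
  set T₁ := S.filter (· ⊆ X₁)
  set T₂ := S.filter fun C => ¬ C ⊆ X₁
  have hS₁₂ : IsEdgeCliqueCover G (T₁ ∪ T₂) := by rwa [filter_union_filter_not_eq]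
  have hT₁ : ∀ C ∈ T₁, C ⊆ X₁ := fun C hC => (mem_filter.1 hC).2
  have hT₂ : ∀ C ∈ T₂, C ⊆ X₂ := fun C hC =>
    ((hS.1 C (mem_filter.1 hC).1).subset_or_subset hunion hsep).resolve_left
      (mem_filter.1 hC).2
  have h₁ := eccNum_induce_le_card_add_card_uncoveredPairs (X := X₁) hS₁₂ hT₂
  have h₂ :=
    eccNum_induce_le_card_add_card_uncoveredPairs (X := X₂) (union_comm T₁ T₂ ▸ hS₁₂) hT₁
  rw [inter_comm] at h₂
  have hpairs := card_add_card_uncoveredPairs_le (Y := X₁ ∩ X₂) hS₁₂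
  have hsplit : #T₁ + #T₂ = #S := card_filter_add_card_filter_not _
  omega
end

section
/- Let G be a connected finite simple graph, X ⊆ V(G), and let G_X be the graph obtained from G by identifying all vertices of X into a single vertex z. Given a connected vertex cover S of G_X, the set obtained from S by replacing z with X is a vertex cover of G, and it can be augmented by at most |X| additional vertices to a connected vertex cover of G; hence cvc(G) ≤ cvc(G_X) + 2|X|. -/
/-- The graph obtained from `G` by identifying all vertices of `X` into a single new
vertex `z` (represented by `none`). -/
def identify {V : Type*} [DecidableEq V] (G : SimpleGraph V) (X : Finset V) :
    SimpleGraph (Option {v : V // v ∉ X}) where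
  Adj a b :=
    match a, b with
    | some u, some v => G.Adj ↑u ↑v
    | some u, none => ∃ x ∈ X, G.Adj ↑u x
    | none, some v => ∃ x ∈ X, G.Adj x ↑v
    | none, none => False
  symm := by
    constructor
    rintro (_ | u) (_ | v) h
    · exact h.elim
    · obtain ⟨x, hx, hadj⟩ := h
      exact ⟨x, hx, hadj.symm⟩
    · obtain ⟨x, hx, hadj⟩ := h
      exact ⟨x, hx, hadj.symm⟩
    · exact h.symm
  loopless := by
    constructor
    rintro (_ | u) h
    · exact h
    · exact G.irrefl h

/-- The minimum size of a connected vertex cover of a graph. -/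
noncomputable def cvcNum {α : Type*} (G : SimpleGraph α) : ℕ :=
  sInf {n | ∃ S : Finset α, (∀ u v : α, G.Adj u v → u ∈ S ∨ v ∈ S) ∧
    (G.induce (↑S : Set α)).Connected ∧ S.card = n}

/-!
Replacing `z` by `X` turns a connected vertex cover `S` of `G_X` into a vertex cover `T` of `G`
in which every vertex is joined, inside `T`, to a vertex of `X` or to one fixed vertex of `S`;
so `G[T]` has at most `|X| + 1` components. As `T` is a vertex cover of a connected graph, a
component of `G[T]` that is not everything is at distance two from another one, and the middle
vertex merges them. Adding at most `|X|` such vertices gives a connected vertex cover of `G`.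
-/

namespace SimpleGraph

variable {V : Type*} {G : SimpleGraph V}

theorem Preconnected.forall_of_adj (hG : G.Preconnected) {P : V → Prop} {v₀ : V} (h₀ : P v₀)
    (hstep : ∀ ⦃a b⦄, G.Adj a b → P a → P b) (v : V) : P v := by
  induction (reachable_iff_reflTransGen _ _).1 (hG v₀ v) with
  | refl => exact h₀
  | tail _ hbc ih => exact hstep hbc ih

def ReachableIn (G : SimpleGraph V) (s : Set V) (u v : V) : Prop :=
  ∃ (hu : u ∈ s) (hv : v ∈ s), (G.induce s).Reachable ⟨u, hu⟩ ⟨v, hv⟩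

namespace ReachableIn

variable {s t : Set V} {u v w : V}

theorem refl (hu : u ∈ s) : G.ReachableIn s u u := ⟨hu, hu, .rfl⟩

theorem of_adj (hu : u ∈ s) (hv : v ∈ s) (h : G.Adj u v) : G.ReachableIn s u v :=
  ⟨hu, hv, Adj.reachable (G := G.induce s) h⟩

theorem symm (h : G.ReachableIn s u v) : G.ReachableIn s v u :=
  let ⟨hu, hv, r⟩ := h; ⟨hv, hu, r.symm⟩

theorem trans (h₁ : G.ReachableIn s u v) (h₂ : G.ReachableIn s v w) : G.ReachableIn s u w :=
  let ⟨hu, _, r₁⟩ := h₁; let ⟨_, hw, r₂⟩ := h₂; ⟨hu, hw, r₁.trans r₂⟩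

theorem mem_right (h : G.ReachableIn s u v) : v ∈ s := h.2.1

theorem mono (hst : s ⊆ t) (h : G.ReachableIn s u v) : G.ReachableIn t u v :=
  let ⟨hu, hv, r⟩ := h; ⟨hst hu, hst hv, r.map (induceHomOfLE G hst).toHom⟩

theorem induce_connected (hu : u ∈ s) (h : ∀ v ∈ s, G.ReachableIn s u v) :
    (G.induce s).Connected := by
  rw [connected_iff_exists_forall_reachable]
  exact ⟨⟨u, hu⟩, fun ⟨v, hv⟩ => (h v hv).2.2⟩

end ReachableIn

variable {s : Set V} {u v : V}

theorem Preconnected.exists_bridge_of_not_reachableIn (hG : G.Preconnected)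
    (hs : G.IsVertexCover s) (hu : u ∈ s) (hv : v ∈ s) (huv : ¬ G.ReachableIn s u v) :
    ∃ w ∉ s, ∃ a b, G.ReachableIn s u a ∧ G.Adj a w ∧ G.Adj w b ∧ b ∈ s ∧
      ¬ G.ReachableIn s u b := by
  by_contra! hno
  -- without a bridge, the vertices reachable from `u` in `s` and their neighbours outside `s`
  -- would form a set closed under adjacency
  let A : Set V := {x | G.ReachableIn s u x ∨ x ∉ s ∧ ∃ a, G.ReachableIn s u a ∧ G.Adj a x}
  have hA : ∀ x, x ∈ A := hG.forall_of_adj (P := (· ∈ A)) (Or.inl (.refl hu)) <| by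
    rintro x y hxy (hx | ⟨hxs, a, ha, hax⟩)
    · by_cases hys : y ∈ s
      · exact Or.inl (hx.trans (.of_adj hx.mem_right hys hxy))
      · exact Or.inr ⟨hys, x, hx, hxy⟩
    · have hys : y ∈ s := (hs hxy).resolve_left hxs
      exact Or.inl (hno x hxs a y ha hax hxy hys)
  exact (hA v).elim huv fun h => h.1 hv

variable [DecidableEq V]

theorem Preconnected.exists_connected_isVertexCover_card_add_one_le (hG : G.Preconnected)
    {T C : Finset V} (hT : G.IsVertexCover ↑T) (hCT : C ⊆ T) (hC : C.Nonempty)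
    (hrep : ∀ v ∈ T, ∃ c ∈ C, G.ReachableIn ↑T v c) :
    ∃ T' : Finset V, G.IsVertexCover ↑T' ∧ (G.induce ↑T').Connected ∧
      T'.card + 1 ≤ T.card + C.card := by
  induction C using Finset.strongInduction generalizing T with
  | H C ih =>
  obtain ⟨c₀, hc₀⟩ := hC
  by_cases hall : ∀ v ∈ T, G.ReachableIn ↑T c₀ v
  · exact ⟨T, hT, ReachableIn.induce_connected (hCT hc₀) hall, by
      have := Finset.card_pos.2 ⟨c₀, hc₀⟩; omega⟩
  push Not at hall
  obtain ⟨v, hv, hnv⟩ := hall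
  obtain ⟨w, hw, a, b, ha, haw, hwb, hb, hnb⟩ :=
    hG.exists_bridge_of_not_reachableIn hT (hCT hc₀) hv hnv
  obtain ⟨cb, hcb, hbcb⟩ := hrep b hb
  have hcb₀ : c₀ ≠ cb := by rintro rfl; exact hnb hbcb.symm
  have hsub : (↑T : Set V) ⊆ ↑(insert w T) := Finset.coe_subset.2 (Finset.subset_insert _ _)
  have hwT : w ∈ (↑(insert w T) : Set V) := Finset.mem_coe.2 (Finset.mem_insert_self _ _)
  -- joining through `w` makes the anchor `cb` redundant
  have hwc₀ : G.ReachableIn ↑(insert w T) w c₀ :=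
    ((ha.mono hsub).trans (.of_adj (hsub ha.mem_right) hwT haw)).symm
  have hcbw : G.ReachableIn ↑(insert w T) cb w :=
    (hbcb.mono hsub).symm.trans (ReachableIn.of_adj (hsub hb) hwT hwb.symm)
  obtain ⟨T', hT'⟩ := ih (C.erase cb) (Finset.erase_ssubset hcb) (T := insert w T)
    (hT.subset hsub) ((Finset.erase_subset _ _).trans (hCT.trans (Finset.subset_insert _ _)))
    ⟨c₀, Finset.mem_erase.2 ⟨hcb₀, hc₀⟩⟩ <| by
      intro x hx
      rcases Finset.mem_insert.1 hx with rfl | hx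
      · exact ⟨c₀, Finset.mem_erase.2 ⟨hcb₀, hc₀⟩, hwc₀⟩
      obtain ⟨c, hc, hxc⟩ := hrep x hx
      by_cases hccb : c = cb
      · subst hccb
        exact ⟨c₀, Finset.mem_erase.2 ⟨hcb₀, hc₀⟩, ((hxc.mono hsub).trans hcbw).trans hwc₀⟩
      · exact ⟨c, Finset.mem_erase.2 ⟨hccb, hc⟩, hxc.mono hsub⟩
  refine ⟨T', hT'.1, hT'.2.1, ?_⟩
  have := hT'.2.2
  rw [Finset.card_insert_of_notMem hw, Finset.card_erase_of_mem hcb] at this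
  have := Finset.card_pos.2 ⟨c₀, hc₀⟩
  omega

end SimpleGraph

theorem cvcNum_le {α : Type*} {G : SimpleGraph α} {S : Finset α} (hS : G.IsVertexCover ↑S)
    (hconn : (G.induce ↑S).Connected) : cvcNum G ≤ S.card :=
  Nat.sInf_le ⟨S, fun _ _ h => hS h, hconn, rfl⟩

theorem exists_card_eq_cvcNum {α : Type*} [Fintype α] {G : SimpleGraph α} (hG : G.Connected) :
    ∃ S : Finset α, G.IsVertexCover ↑S ∧ (G.induce ↑S).Connected ∧ S.card = cvcNum G := by
  obtain ⟨S, hS, hconn, hcard⟩ := Nat.sInf_mem (s := {n | ∃ S : Finset α,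
      (∀ u v : α, G.Adj u v → u ∈ S ∨ v ∈ S) ∧ (G.induce (↑S : Set α)).Connected ∧ S.card = n})
    ⟨_, Finset.univ, fun _ _ _ => .inl (Finset.mem_univ _), by
      rwa [Finset.coe_univ, (SimpleGraph.induceUnivIso G).connected_iff], rfl⟩
  exact ⟨S, fun _ _ h => hS _ _ h, hconn, hcard⟩

section Identify

open SimpleGraph

variable {V : Type*} [DecidableEq V] {G : SimpleGraph V} {X : Finset V}

def identifyProj (X : Finset V) (v : V) : Option {v : V // v ∉ X} :=
  if h : v ∈ X then none else some ⟨v, h⟩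

theorem identifyProj_of_mem {v : V} (h : v ∈ X) : identifyProj X v = none := dif_pos h

theorem identifyProj_of_notMem {v : V} (h : v ∉ X) : identifyProj X v = some ⟨v, h⟩ :=
  dif_neg h

theorem identify_adj_identifyProj {u v : V} (h : G.Adj u v) (hu : u ∉ X) :
    (identify G X).Adj (identifyProj X u) (identifyProj X v) := by
  rw [identifyProj_of_notMem hu]
  by_cases hv : v ∈ X
  · rw [identifyProj_of_mem hv]; exact ⟨v, hv, h⟩
  · rw [identifyProj_of_notMem hv]; exact h

theorem identify_connected (hG : G.Connected) (hX : X.Nonempty) : (identify G X).Connected := by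
  obtain ⟨x₀, hx₀⟩ := hX
  have hproj : ∀ v, (identify G X).Reachable none (identifyProj X v) := by
    refine hG.preconnected.forall_of_adj (by rw [identifyProj_of_mem hx₀]) fun u v huv hu => ?_
    by_cases hvX : v ∈ X
    · rw [identifyProj_of_mem hvX]
    · exact hu.trans (identify_adj_identifyProj huv.symm hvX).reachable.symm
  rw [connected_iff_exists_forall_reachable]
  refine ⟨none, ?_⟩
  rintro (_ | v)
  · rfl
  · simpa [identifyProj_of_notMem v.2] using hproj v

def unidentify (X : Finset V) (S : Finset (Option {v : V // v ∉ X})) : Finset V :=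
  X ∪ S.eraseNone.map (Function.Embedding.subtype _)

theorem mem_unidentify {S : Finset (Option {v : V // v ∉ X})} {v : V} :
    v ∈ unidentify X S ↔ v ∈ X ∨ ∃ h : v ∉ X, some ⟨v, h⟩ ∈ S := by
  simp [unidentify]

theorem card_unidentify_le (S : Finset (Option {v : V // v ∉ X})) :
    (unidentify X S).card ≤ X.card + S.card :=
  (Finset.card_union_le _ _).trans <| by
    rw [Finset.card_map]; exact Nat.add_le_add_left (Finset.card_eraseNone_le S) _

theorem isVertexCover_unidentify {S : Finset (Option {v : V // v ∉ X})}
    (hS : (identify G X).IsVertexCover ↑S) : G.IsVertexCover ↑(unidentify X S) := by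
  intro u v huv
  by_cases hu : u ∈ X
  · exact .inl (mem_unidentify.2 (.inl hu))
  by_cases hv : v ∈ X
  · exact .inr (mem_unidentify.2 (.inl hv))
  have := hS (identify_adj_identifyProj huv hu)
  rw [identifyProj_of_notMem hu, identifyProj_of_notMem hv] at this
  exact this.imp (fun h => mem_unidentify.2 (.inr ⟨hu, h⟩))
    fun h => mem_unidentify.2 (.inr ⟨hv, h⟩)

theorem exists_reachableIn_unidentify {S : Finset (Option {v : V // v ∉ X})}
    (hS : ((identify G X).induce ↑S).Connected) {s₀ : Option {v : V // v ∉ X}} (hs₀ : s₀ ∈ S)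
    {x₀ : V} {v : V} (hv : v ∈ unidentify X S) :
    ∃ c ∈ insert (s₀.elim x₀ Subtype.val) X, G.ReachableIn ↑(unidentify X S) v c := by
  -- `s₀.elim x₀ Subtype.val` is the vertex of `G` standing for `s₀`; for `s₀ = z` it is
  -- irrelevant, since then `X` already contains the anchors
  rcases mem_unidentify.1 hv with hvX | ⟨hvX, hvS⟩
  · exact ⟨v, Finset.mem_insert_of_mem hvX, .refl hv⟩
  have hmem : ∀ {u : {v : V // v ∉ X}}, some u ∈ S → u.1 ∈ unidentify X S :=
    fun {u} hu => mem_unidentify.2 (.inr ⟨u.2, hu⟩)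
  refine hS.preconnected.forall_of_adj (v₀ := ⟨s₀, hs₀⟩) (P := fun o => ∀ u, o.1 = some u →
      ∃ c ∈ insert (s₀.elim x₀ Subtype.val) X, G.ReachableIn ↑(unidentify X S) u c)
    ?_ ?_ ⟨some ⟨v, hvX⟩, hvS⟩ ⟨v, hvX⟩ rfl
  · rintro u rfl
    exact ⟨u, Finset.mem_insert_self _ _, .refl (hmem hs₀)⟩
  · rintro ⟨o, ho⟩ ⟨o', ho'⟩ hadj hP u rfl
    cases o with
    | none =>
      obtain ⟨x, hx, hxu⟩ := hadj
      exact ⟨x, Finset.mem_insert_of_mem hx,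
        .of_adj (hmem ho') (mem_unidentify.2 (.inl hx)) hxu.symm⟩
    | some w =>
      obtain ⟨c, hc, hwc⟩ := hP w rfl
      exact ⟨c, hc, (ReachableIn.of_adj (hmem ho') (hmem ho) hadj.symm).trans hwc⟩

end Identify

/-- For `G` connected and `X ⊆ V(G)` nonempty, `cvc(G) ≤ cvc(G_X) + 2|X|`,
where `G_X` is obtained from `G` by identifying the vertices of `X` into a single vertex. -/
theorem stmt_11 {V : Type*} [Fintype V] [DecidableEq V] (G : SimpleGraph V)
    (X : Finset V) (hG : G.Connected) (hX : X.Nonempty) :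
    cvcNum G ≤ cvcNum (identify G X) + 2 * X.card := by
  obtain ⟨S, hScov, hSconn, hScard⟩ := exists_card_eq_cvcNum (identify_connected hG hX)
  obtain ⟨x₀, hx₀⟩ := hX
  obtain ⟨⟨s₀, hs₀⟩⟩ := hSconn.nonempty
  have hCT : insert (s₀.elim x₀ Subtype.val) X ⊆ unidentify X S := by
    refine Finset.insert_subset_iff.2 ⟨?_, fun x hx => mem_unidentify.2 (.inl hx)⟩
    rcases s₀ with _ | u
    · exact mem_unidentify.2 (.inl hx₀)
    · exact mem_unidentify.2 (.inr ⟨u.2, hs₀⟩)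
  obtain ⟨T, hT, hTconn, hTcard⟩ := hG.preconnected.exists_connected_isVertexCover_card_add_one_le
    (isVertexCover_unidentify hScov) hCT ⟨x₀, Finset.mem_insert_of_mem hx₀⟩
    fun v hv => exists_reachableIn_unidentify hSconn hs₀ hv
  have := cvcNum_le hT hTconn
  have := card_unidentify_le S
  have := Finset.card_insert_le (s₀.elim x₀ Subtype.val) X
  omega
end

section
/- Let G be a finite simple graph and S'' a vertex cover of G such that G[S''] has at least two connected components and G is connected. Then there exists a vertex v ∈ V(G) \ S'' such that G[S'' ∪ {v}] has strictly fewer connected components than G[S'']. -/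
/-!
Pick `a, b ∈ S''` in different components of `G[S'']` and let `N` be the component of `a`
together with its neighbours outside `S''`. A walk from `a` to `b` in `G` leaves `N` along some
edge `xy`. Closure of the component under `G[S'']`-adjacency and the definition of `N` force
`x ∉ S''` and `y ∈ S''` (the latter because `S''` is a vertex cover), so `x` is adjacent to two
vertices of `S''` in different components. Adding `x` merges these two components and leaves
every other component alone, so the number of components drops.
-/

open SimpleGraph

lemma Nat.card_lt_card_of_surjective_of_not_injective {α β : Type*} [Finite α] (f : α → β)
    (hf : f.Surjective) (hf' : ¬ f.Injective) : Nat.card β < Nat.card α :=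
  (Nat.card_le_card_of_surjective f hf).lt_of_ne fun h =>
    hf' ((Nat.bijective_iff_surjective_and_card f).mpr ⟨hf, h.symm⟩).injective

namespace SimpleGraph

variable {V : Type*} {G : SimpleGraph V} {S : Set V}

lemma IsVertexCover.exists_adj_adj_not_reachable_induce (hS : G.IsVertexCover S)
    (hG : G.Preconnected) {a b : S} (hab : ¬ (G.induce S).Reachable a b) :
    ∃ v ∉ S, ∃ u w : S, G.Adj u v ∧ G.Adj v w ∧ ¬ (G.induce S).Reachable u w := by
  let C : Set V := {x | ∃ hx : x ∈ S, (G.induce S).Reachable a ⟨x, hx⟩}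
  let N : Set V := C ∪ {x | x ∉ S ∧ ∃ u ∈ C, G.Adj u x}
  have haN : (a : V) ∈ N := Or.inl ⟨a.2, .rfl⟩
  have hbN : (b : V) ∉ N := by
    rintro (⟨_, hb⟩ | ⟨hb, -⟩)
    exacts [hab hb, hb b.2]
  obtain ⟨d, -, hxN, hyN⟩ := (hG a b).some.exists_boundary_dart N haN hbN
  rcases hxN with ⟨hx, hax⟩ | ⟨hx, u, ⟨hu, hau⟩, hux⟩
  · by_cases hy : d.snd ∈ S
    · have hxy : (G.induce S).Adj ⟨d.fst, hx⟩ ⟨d.snd, hy⟩ := by simp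
      exact absurd (Or.inl ⟨hy, hax.trans hxy.reachable⟩) hyN
    · exact absurd (Or.inr ⟨hy, d.fst, ⟨hx, hax⟩, d.adj⟩) hyN
  · have hy : d.snd ∈ S := (hS d.adj).resolve_left hx
    refine ⟨d.fst, hx, ⟨u, hu⟩, ⟨d.snd, hy⟩, hux, d.adj, fun huy => hyN (Or.inl ⟨hy, ?_⟩)⟩
    exact hau.trans huy

lemma card_connectedComponent_induce_insert_lt [Finite (G.induce S).ConnectedComponent]
    {v : V} {u w : S} (huv : G.Adj u v) (hvw : G.Adj v w)
    (huw : ¬ (G.induce S).Reachable u w) :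
    Nat.card (G.induce (insert v S)).ConnectedComponent <
      Nat.card (G.induce S).ConnectedComponent := by
  let F := ConnectedComponent.map (G.induceHomOfLE (Set.subset_insert v S)).toHom
  have hF (x : S) : F (connectedComponentMk _ x) = connectedComponentMk _ ⟨x, Or.inr x.2⟩ := rfl
  have huv' : (G.induce (insert v S)).Adj ⟨u, Or.inr u.2⟩ ⟨v, Or.inl rfl⟩ := by simpa using huv
  have hvw' : (G.induce (insert v S)).Adj ⟨v, Or.inl rfl⟩ ⟨w, Or.inr w.2⟩ := by simpa using hvw
  refine Nat.card_lt_card_of_surjective_of_not_injective F ?_ fun hinj => huw ?_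
  · rintro ⟨⟨x, rfl | hx⟩⟩
    · exact ⟨connectedComponentMk _ u, ConnectedComponent.sound huv'.reachable⟩
    · exact ⟨connectedComponentMk _ ⟨x, hx⟩, rfl⟩
  · refine ConnectedComponent.exact (hinj ?_)
    rw [hF, hF]
    exact ConnectedComponent.sound (huv'.reachable.trans hvw'.reachable)

end SimpleGraph

/-- If `G` is connected, `S''` is a vertex cover of `G`, and `G[S'']` has at
least two connected components, then there is a vertex `v ∉ S''` such that
`G[S'' ∪ {v}]` has strictly fewer connected components. -/
theorem stmt_12 {V : Type*} [Fintype V] [DecidableEq V] (G : SimpleGraph V)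
    (S : Finset V) (hG : G.Connected)
    (hvc : ∀ u v : V, G.Adj u v → u ∈ S ∨ v ∈ S)
    (h2 : 2 ≤ Nat.card (G.induce (↑S : Set V)).ConnectedComponent) :
    ∃ v : V, v ∉ S ∧
      Nat.card (G.induce (↑(insert v S) : Set V)).ConnectedComponent <
        Nat.card (G.induce (↑S : Set V)).ConnectedComponent := by
  obtain ⟨c, d, hcd⟩ := Finite.one_lt_card_iff_nontrivial.mp h2
  obtain ⟨a, rfl⟩ := c.exists_rep
  obtain ⟨b, rfl⟩ := d.exists_rep
  have hS : G.IsVertexCover S := fun u v => hvc u v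
  obtain ⟨v, hv, u, w, huv, hvw, huw⟩ :=
    hS.exists_adj_adj_not_reachable_induce hG.preconnected fun hab =>
      hcd (ConnectedComponent.sound hab)
  refine ⟨v, hv, ?_⟩
  rw [Finset.coe_insert]
  exact card_connectedComponent_induce_insert_lt huv hvw huw
end
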